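/- arXiv:2001.08663 — 2 statements merged into one kernel-verified Lean document; each statement's English description precedes it below -/
import Mathlib

section
/- The adversarial distance is lower bounded by the radial distance: d(x₁, x₂) ≥ (|x₁| − |x₂|)² / (4L) for all x₁, x₂ ∈ ℂ. -/
/-- Energy (effort) of a control on `[0, L]`. -/
noncomputable def energy (L : ℝ) (n : ℝ → ℂ) : ℝ := ∫ z in (0:ℝ)..L, ‖n z‖^2

/-- The per-sample channel ODE: `q' = iγ|q|²q + n` on `[0, L]`. -/
def IsSol (γ L : ℝ) (n q : ℝ → ℂ) : Prop :=
  ∀ z ∈ Set.Icc (0:ℝ) L,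
    HasDerivAt q (Complex.I * (γ:ℂ) * ((‖q z‖:ℂ))^2 * q z + n z) z

/-- The noise ball `B_E(x)`: outputs reachable from input `x` with effort at most `E`. -/
def noiseBall (γ L : ℝ) (x : ℂ) (E : ℝ) : Set ℂ :=
  {y | ∃ n q : ℝ → ℂ, ContinuousOn n (Set.Icc 0 L) ∧ IsSol γ L n q ∧
    q 0 = x ∧ q L = y ∧ energy L n ≤ E}

/-- The adversarial distance between two input points. -/
noncomputable def adist (γ L : ℝ) (x₁ x₂ : ℂ) : ℝ :=
  sInf {E | 0 ≤ E ∧ (noiseBall γ L x₁ E ∩ noiseBall γ L x₂ E).Nonempty}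

/-! The Kerr term `iγ|q|²q` only rotates the phase of `q`: after the gauge change
`p = exp(-iγ∫₀^z |q|²) q`, which preserves the modulus, the equation becomes `p' = e^{iθ} n` with
`θ` real. Hence `|q|` drifts by at most `∫₀^L |n| ≤ √(L E)` (Cauchy–Schwarz), i.e.
`(|q(L)| - |q(0)|)² ≤ L E`. If `x₁` and `x₂` both reach `y` with energy `E`, then
`(|x₁| - |x₂|)² ≤ 2(|x₁| - |y|)² + 2(|y| - |x₂|)² ≤ 4 L E`. The infimum defining `adist` is taken
over a nonempty set, because every straight path is a solution for a suitable continuous control. -/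

open Complex intervalIntegral MeasureTheory Set

theorem abs_norm_sub_norm_le_integral_of_hasDerivAt_rotation {a b : ℝ} (hab : a ≤ b)
    {q n : ℝ → ℂ} {ω : ℝ → ℝ} (hω : ContinuousOn ω (Icc a b)) (hn : ContinuousOn n (Icc a b))
    (hq : ∀ z ∈ Icc a b, HasDerivAt q (I * ω z * q z + n z) z) :
    |‖q b‖ - ‖q a‖| ≤ ∫ z in a..b, ‖n z‖ := by
  -- clamping `ω` to `[a, b]` makes its primitive differentiable at the endpoints too
  set ω' : ℝ → ℝ := fun t ↦ ω (max a (min b t))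
  have hω' : Continuous ω' := hω.comp_continuous (by fun_prop)
    fun t ↦ ⟨le_max_left _ _, max_le hab (min_le_left _ _)⟩
  have hω'_eq : ∀ z ∈ Icc a b, ω' z = ω z := fun z hz ↦ by
    simp only [ω', min_eq_right hz.2, max_eq_right hz.1]
  set u : ℝ → ℂ := fun z ↦ exp (↑(-∫ t in a..z, ω' t) * I)
  have hu_norm : ∀ z, ‖u z‖ = 1 := fun z ↦ norm_exp_ofReal_mul_I _
  have hu : ∀ z, HasDerivAt u (u z * (-ω' z * I)) z := fun z ↦ by
    have := (((hω'.integral_hasStrictDerivAt a z).hasDerivAt.neg.ofReal_comp).mul_const I).cexp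
    exact this.congr_deriv (by simp only [u, Pi.neg_apply]; push_cast; ring)
  have hun : ∀ z ∈ uIcc a b, HasDerivAt (fun z ↦ u z * q z) (u z * n z) z := fun z hz ↦ by
    rw [uIcc_of_le hab] at hz
    refine ((hu z).mul (hq z hz)).congr_deriv ?_
    rw [hω'_eq z hz]; ring
  have hint : IntervalIntegrable (fun z ↦ u z * n z) volume a b :=
    ((continuous_iff_continuousAt.2 fun z ↦ (hu z).continuousAt).continuousOn.mul
      (uIcc_of_le hab ▸ hn)).intervalIntegrable
  calc |‖q b‖ - ‖q a‖| = |‖u b * q b‖ - ‖u a * q a‖| := by simp only [norm_mul, hu_norm, one_mul]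
    _ ≤ ‖u b * q b - u a * q a‖ := abs_norm_sub_norm_le _ _
    _ = ‖∫ z in a..b, u z * n z‖ := by rw [integral_eq_sub_of_hasDerivAt hun hint]
    _ ≤ ∫ z in a..b, ‖u z * n z‖ := norm_integral_le_integral_norm hab
    _ = ∫ z in a..b, ‖n z‖ := by simp only [norm_mul, hu_norm, one_mul]

theorem sq_integral_le_mul_integral_sq {a b : ℝ} (hab : a ≤ b) {f : ℝ → ℝ}
    (hf : ContinuousOn f (Icc a b)) :
    (∫ z in a..b, f z) ^ 2 ≤ (b - a) * ∫ z in a..b, f z ^ 2 := by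
  set A := ∫ z in a..b, f z
  have hf₁ : IntervalIntegrable f volume a b := (uIcc_of_le hab ▸ hf).intervalIntegrable
  have hf₂ : IntervalIntegrable (fun z ↦ f z ^ 2) volume a b :=
    (uIcc_of_le hab ▸ hf.pow 2).intervalIntegrable
  have hexpand : ∫ z in a..b, ((b - a) * f z - A) ^ 2
      = (b - a) * ((b - a) * (∫ z in a..b, f z ^ 2) - A ^ 2) := by
    have hsq : (fun z ↦ ((b - a) * f z - A) ^ 2)
        = fun z ↦ (b - a) ^ 2 * f z ^ 2 - 2 * (b - a) * A * f z + A ^ 2 := by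
      funext z; ring
    rw [hsq, integral_add ((hf₂.const_mul _).sub (hf₁.const_mul _)) intervalIntegrable_const,
      integral_sub (hf₂.const_mul _) (hf₁.const_mul _), intervalIntegral.integral_const_mul,
      intervalIntegral.integral_const_mul, intervalIntegral.integral_const, smul_eq_mul]
    ring
  have hnonneg : 0 ≤ ∫ z in a..b, ((b - a) * f z - A) ^ 2 :=
    integral_nonneg hab fun _ _ ↦ sq_nonneg _
  rcases hab.eq_or_lt with rfl | hlt
  · simp [A]
  · rw [hexpand, mul_nonneg_iff_of_pos_left (sub_pos.2 hlt)] at hnonneg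
    exact sub_nonneg.1 hnonneg

theorem noiseBall_mono (γ L : ℝ) (x : ℂ) : Monotone (noiseBall γ L x) :=
  fun _ _ hE _ ⟨n, q, hn, hq, h₀, h_L, hn_E⟩ ↦ ⟨n, q, hn, hq, h₀, h_L, hn_E.trans hE⟩

theorem exists_mem_noiseBall (γ : ℝ) {L : ℝ} (hL : L ≠ 0) (x y : ℂ) :
    ∃ E, y ∈ noiseBall γ L x E := by
  set v : ℂ := (y - x) / L
  set q : ℝ → ℂ := fun z ↦ x + z * v
  set n : ℝ → ℂ := fun z ↦ v - I * γ * (‖q z‖ : ℂ) ^ 2 * q z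
  have hq : ∀ z, HasDerivAt q v z := fun z ↦
    (((hasDerivAt_id z).ofReal_comp.mul_const v).const_add x).congr_deriv (by simp)
  have hn : ContinuousOn n (Icc 0 L) := by fun_prop
  refine ⟨energy L n, n, q, hn, fun z _ ↦ (hq z).congr_deriv (by ring), by simp [q], ?_, le_rfl⟩
  have hL' : (L : ℂ) ≠ 0 := by exact_mod_cast hL
  simp only [q, v]
  field_simp
  ring

theorem sq_norm_sub_norm_le_of_mem_noiseBall {γ L E : ℝ} (hL : 0 ≤ L) {x y : ℂ}
    (hy : y ∈ noiseBall γ L x E) : (‖y‖ - ‖x‖) ^ 2 ≤ L * E := by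
  obtain ⟨n, q, hn, hq, rfl, rfl, hE⟩ := hy
  have hq_cont : ContinuousOn q (Icc 0 L) := fun z hz ↦ (hq z hz).continuousAt.continuousWithinAt
  have hdrift := abs_norm_sub_norm_le_integral_of_hasDerivAt_rotation hL
    (ω := fun z ↦ γ * ‖q z‖ ^ 2) (by fun_prop) hn
    fun z hz ↦ (hq z hz).congr_deriv (by push_cast; ring)
  calc (‖q L‖ - ‖q 0‖) ^ 2 = |‖q L‖ - ‖q 0‖| ^ 2 := (sq_abs _).symm
    _ ≤ (∫ z in (0:ℝ)..L, ‖n z‖) ^ 2 := pow_le_pow_left₀ (abs_nonneg _) hdrift 2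
    _ ≤ (L - 0) * energy L n := sq_integral_le_mul_integral_sq hL hn.norm
    _ ≤ L * E := by rw [sub_zero]; exact mul_le_mul_of_nonneg_left hE hL

/-- The adversarial distance is lower bounded by the radial distance. -/
theorem adist_lower_bound (γ L : ℝ) (hL : 0 < L) (x₁ x₂ : ℂ) :
    (‖x₁‖ - ‖x₂‖)^2 / (4 * L) ≤ adist γ L x₁ x₂ := by
  obtain ⟨E₁, h₁⟩ := exists_mem_noiseBall γ hL.ne' x₁ 0
  obtain ⟨E₂, h₂⟩ := exists_mem_noiseBall γ hL.ne' x₂ 0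
  have hE : E₁ ≤ max (max E₁ E₂) 0 ∧ E₂ ≤ max (max E₁ E₂) 0 :=
    ⟨le_max_of_le_left (le_max_left _ _), le_max_of_le_left (le_max_right _ _)⟩
  refine le_csInf ⟨_, le_max_right _ _, 0, noiseBall_mono γ L x₁ hE.1 h₁,
    noiseBall_mono γ L x₂ hE.2 h₂⟩ ?_
  rintro E ⟨-, y, hy₁, hy₂⟩
  have hd₁ := sq_norm_sub_norm_le_of_mem_noiseBall hL.le hy₁
  have hd₂ := sq_norm_sub_norm_le_of_mem_noiseBall hL.le hy₂
  rw [div_le_iff₀ (by positivity)]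
  nlinarith [sq_nonneg (‖x₁‖ + ‖x₂‖ - 2 * ‖y‖)]
end

section
/- For any two points x₁, x₂ ∈ ℂ \ {0} and any y ∈ ℂ \ {0} with |y| ∉ {|x₁|, |x₂|}, the adversarial distance satisfies d(x₁, x₂) ≤ max_{k∈{1,2}} ((|y| − |x_k|)²/L) · [1 + (Δ(x_k, y)/ln(|y|/|x_k|))²], where Δ(x,y) = ( arg(y/x) − (γL/3)(|y|³−|x|³)/(|y|−|x|) ) mod 2π taken in [−π, π). -/
/-- `Δ(x,y)`: phase mismatch, reduced mod `2π` into `[-π, π)`. -/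
noncomputable def Delta (γ L : ℝ) (x y : ℂ) : ℝ :=
  toIcoMod Real.two_pi_pos (-Real.pi)
    (Complex.arg (y / x) - (γ * L / 3) * (‖y‖^3 - ‖x‖^3) / (‖y‖ - ‖x‖))

open Complex Set

lemma Complex.exp_mul_I_eq_of_coe_angle_eq {θ ψ : ℝ} (h : (θ : Real.Angle) = ψ) :
    exp (θ * I) = exp (ψ * I) := by
  rw [← Circle.coe_exp, ← Circle.coe_exp, ← Real.Angle.toCircle_coe, ← Real.Angle.toCircle_coe, h]

lemma coe_arg_add_Delta (γ L : ℝ) {x y : ℂ} (hx : x ≠ 0) (hy : y ≠ 0) :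
    ((arg x + (γ * L / 3) * (‖y‖ ^ 3 - ‖x‖ ^ 3) / (‖y‖ - ‖x‖) + Delta γ L x y : ℝ) :
      Real.Angle) = arg y := by
  rw [Delta, Real.Angle.coe_add, Real.Angle.coe_toIcoMod, Real.Angle.coe_add, Real.Angle.coe_sub,
    arg_div_coe_angle hy hx]
  abel

lemma add_div_mul_pos_of_mem_Icc {r₀ r₁ L z : ℝ} (h₀ : 0 < r₀) (h₁ : 0 < r₁)
    (hz : z ∈ Icc 0 L) : 0 < r₀ + (r₁ - r₀) / L * z := by
  obtain rfl | hz₀ := hz.1.eq_or_lt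
  · simpa using h₀
  have hL : 0 < L := hz₀.trans_le hz.2
  have : r₀ + (r₁ - r₀) / L * z = (r₀ * (L - z) + r₁ * z) / L := by field_simp; ring
  rw [this]
  exact div_pos (by nlinarith [hz.2]) hL

lemma hasDerivAt_kerr_phase {γ r₀ a b c z : ℝ} (hr₀ : r₀ ≠ 0) (ha : a ≠ 0)
    (hρ : r₀ + a * z ≠ 0) :
    HasDerivAt
      (fun z ↦ c + γ * ((r₀ + a * z) ^ 3 - r₀ ^ 3) / (3 * a) + b * Real.log ((r₀ + a * z) / r₀))
      (γ * (r₀ + a * z) ^ 2 + b * (a / (r₀ + a * z))) z := by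
  have hρ' : HasDerivAt (fun z ↦ r₀ + a * z) a z := by
    simpa only [mul_one] using ((hasDerivAt_id' z).const_mul a).const_add r₀
  have hcubic := (((hρ'.pow 3).sub_const (r₀ ^ 3)).const_mul γ).div_const (3 * a)
  have hlog := ((hρ'.div_const r₀).log (div_ne_zero hρ hr₀)).const_mul b
  refine ((hcubic.const_add c).add hlog).congr_deriv ?_
  field_simp
  ring

section Channel

variable {γ L : ℝ}

lemma isSol_polar {n : ℝ → ℂ} {ρ φ ρ' φ' : ℝ → ℝ}
    (hρ : ∀ z ∈ Icc 0 L, HasDerivAt ρ (ρ' z) z) (hρ_nonneg : ∀ z ∈ Icc 0 L, 0 ≤ ρ z)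
    (hφ : ∀ z ∈ Icc 0 L, HasDerivAt φ (φ' z) z)
    (hn : ∀ z ∈ Icc 0 L, n z = (ρ' z + I * ρ z * (φ' z - γ * ρ z ^ 2)) * exp (φ z * I)) :
    IsSol γ L n (fun z ↦ ρ z * exp (φ z * I)) := by
  intro z hz
  have hq := (hρ z hz).ofReal_comp.mul ((hφ z hz).ofReal_comp.mul_const I).cexp
  have hnorm : ‖(ρ z : ℂ) * exp (φ z * I)‖ = ρ z := by
    rw [norm_mul, norm_exp_ofReal_mul_I, mul_one, norm_real, Real.norm_of_nonneg (hρ_nonneg z hz)]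
  rw [hnorm, hn z hz]
  refine hq.congr_deriv ?_
  push_cast
  ring

lemma energy_const_mul_exp (c : ℂ) (φ : ℝ → ℝ) :
    energy L (fun z ↦ c * exp (φ z * I)) = L * ‖c‖ ^ 2 := by
  simp [energy, norm_exp_ofReal_mul_I]

lemma mem_noiseBall_of_isSol_const_mul_exp {x y c : ℂ} {φ : ℝ → ℝ} {q : ℝ → ℂ}
    (hφ : ContinuousOn φ (Icc 0 L)) (hq : IsSol γ L (fun z ↦ c * exp (φ z * I)) q)
    (hq₀ : q 0 = x) (hq_L : q L = y) : y ∈ noiseBall γ L x (L * ‖c‖ ^ 2) :=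
  ⟨_, q, by fun_prop, hq, hq₀, hq_L, (energy_const_mul_exp c φ).le⟩

lemma mem_noiseBall_of_norm_ne (hL : 0 < L) {x y : ℂ} (hx : x ≠ 0) (hy : y ≠ 0) (h : ‖y‖ ≠ ‖x‖) :
    y ∈ noiseBall γ L x
      ((‖y‖ - ‖x‖) ^ 2 / L * (1 + (Delta γ L x y / Real.log (‖y‖ / ‖x‖)) ^ 2)) := by
  set r₀ := ‖x‖
  set r₁ := ‖y‖
  have hr₀ : 0 < r₀ := norm_pos_iff.mpr hx
  have hr₁ : 0 < r₁ := norm_pos_iff.mpr hy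
  have hsub : r₁ - r₀ ≠ 0 := sub_ne_zero.mpr h
  have hlog : Real.log (r₁ / r₀) ≠ 0 :=
    Real.log_ne_zero_of_pos_of_ne_one (div_pos hr₁ hr₀) (by rwa [Ne, div_eq_one_iff_eq hr₀.ne'])
  set a := (r₁ - r₀) / L
  set b := Delta γ L x y / Real.log (r₁ / r₀)
  have ha : a ≠ 0 := div_ne_zero hsub hL.ne'
  set ρ : ℝ → ℝ := fun z ↦ r₀ + a * z
  set φ : ℝ → ℝ := fun z ↦ arg x + γ * (ρ z ^ 3 - r₀ ^ 3) / (3 * a) + b * Real.log (ρ z / r₀)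
  have hρ_pos (z : ℝ) (hz : z ∈ Icc 0 L) : 0 < ρ z := add_div_mul_pos_of_mem_Icc hr₀ hr₁ hz
  have hρ (z : ℝ) : HasDerivAt ρ a z := by
    simpa only [mul_one] using ((hasDerivAt_id' z).const_mul a).const_add r₀
  have hφ (z : ℝ) (hz : z ∈ Icc 0 L) : HasDerivAt φ (γ * ρ z ^ 2 + b * (a / ρ z)) z :=
    hasDerivAt_kerr_phase hr₀.ne' ha (hρ_pos z hz).ne'
  have hρ_L : ρ L = r₁ := by simp only [ρ, a]; field_simp; ring
  have hφ_L : φ L = arg x + (γ * L / 3) * (r₁ ^ 3 - r₀ ^ 3) / (r₁ - r₀) + Delta γ L x y := by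
    simp only [φ, hρ_L, b, div_mul_cancel₀ _ hlog, a]
    field_simp
  have hE : (r₁ - r₀) ^ 2 / L * (1 + b ^ 2) = L * ‖(a : ℂ) + (a * b : ℝ) * I‖ ^ 2 := by
    rw [norm_add_mul_I, Real.sq_sqrt (by positivity)]
    simp only [a]
    field_simp
  rw [hE]
  refine mem_noiseBall_of_isSol_const_mul_exp (q := fun z ↦ ρ z * exp (φ z * I))
    (fun z hz ↦ (hφ z hz).continuousAt.continuousWithinAt) ?_ (by simp [ρ, φ, r₀]) ?_
  · refine isSol_polar (fun z _ ↦ hρ z) (fun z hz ↦ (hρ_pos z hz).le) hφ fun z hz ↦ ?_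
    have : (ρ z : ℂ) ≠ 0 := ofReal_ne_zero.mpr (hρ_pos z hz).ne'
    push_cast
    field_simp
    ring
  · show (ρ L : ℂ) * exp (φ L * I) = y
    rw [exp_mul_I_eq_of_coe_angle_eq (hφ_L ▸ coe_arg_add_Delta γ L hx hy)]
    exact hρ_L ▸ norm_mul_exp_arg_mul_I y

lemma adist_le_of_mem_noiseBall {E : ℝ} {x₁ x₂ y : ℂ} (hE : 0 ≤ E)
    (hy₁ : y ∈ noiseBall γ L x₁ E) (hy₂ : y ∈ noiseBall γ L x₂ E) : adist γ L x₁ x₂ ≤ E :=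
  csInf_le ⟨0, fun _ hE' ↦ hE'.1⟩ ⟨hE, y, hy₁, hy₂⟩

lemma noiseBall_mono_s16 (x : ℂ) {E E' : ℝ} (h : E ≤ E') :
    noiseBall γ L x E ⊆ noiseBall γ L x E' := by
  rintro y ⟨n, q, hn, hq, hq₀, hq_L, hE⟩
  exact ⟨n, q, hn, hq, hq₀, hq_L, hE.trans h⟩

end Channel

/-- Upper bound on the adversarial distance obtained from constant-magnitude
controls driving both `x₁` and `x₂` to a common point `y`. -/
theorem adist_upper_bound (γ L : ℝ) (hL : 0 < L)
    (x₁ x₂ y : ℂ) (hx₁ : x₁ ≠ 0) (hx₂ : x₂ ≠ 0) (hy : y ≠ 0)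
    (h₁ : ‖y‖ ≠ ‖x₁‖) (h₂ : ‖y‖ ≠ ‖x₂‖) :
    adist γ L x₁ x₂ ≤
      max ((‖y‖ - ‖x₁‖)^2 / L * (1 + (Delta γ L x₁ y / Real.log (‖y‖ / ‖x₁‖))^2))
        ((‖y‖ - ‖x₂‖)^2 / L * (1 + (Delta γ L x₂ y / Real.log (‖y‖ / ‖x₂‖))^2)) :=
  adist_le_of_mem_noiseBall (le_max_of_le_left (by positivity))
    (noiseBall_mono_s16 x₁ (le_max_left _ _) (mem_noiseBall_of_norm_ne hL hx₁ hy h₁))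
    (noiseBall_mono_s16 x₂ (le_max_right _ _) (mem_noiseBall_of_norm_ne hL hx₂ hy h₂))
end
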